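/- Langer transformation identity: let η(z) be as in the Langer transformation with inverse z(η), ż = dz/dη, and suppose φ and Φ are related by φ''(z) = ż(η(z))^{1/2} Φ(η(z)). If Φ satisfies ε Φ''(η) − U'_c η Φ(η) = f(η), then φ satisfies ε φ'''' − (U − c) φ'' = ż^{−3/2} f(η(z)) + ε (d²/dz²)(ż^{1/2}) · ż^{−1/2} · φ''(z). -/

import Mathlib

/-!
Since `η' = ż⁻¹ = sq⁻²`, differentiating `φ'' = sq · Φ(η)` once gives `sq' Φ(η) + sq⁻¹ Φ'(η)`, and
differentiating again the two `Φ'(η)` terms cancel, leaving `sq'' Φ(η) + sq⁻³ Φ''(η)`. The Langer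
relation says `(U - c) sq = sq⁻³ U'_c η`, so `ε φ'''' - (U - c) φ''` is `sq⁻³ (ε Φ'' - U'_c η Φ)(η)`
plus the commutator term `ε sq'' Φ(η) = ε sq'' sq⁻¹ φ''`.
-/

-- `deriv η z ≠ 0` excludes the junk value of `deriv`, so `η` is differentiable at `z`.
theorem hasDerivAt_of_sq_eq_inv_deriv {η s : ℝ → ℂ} {z : ℝ} (hs : s z ≠ 0)
    (h : s z ^ 2 = (deriv η z)⁻¹) : HasDerivAt η (s z ^ 2)⁻¹ z := by
  have hη' : deriv η z ≠ 0 := fun h0 ↦ pow_ne_zero 2 hs (by rw [h, h0, inv_zero])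
  rw [h, inv_inv]
  exact (differentiableAt_of_deriv_ne_zero hη').hasDerivAt

section Liouville

variable {s η : ℝ → ℂ} {Φ : ℂ → ℂ}

theorem hasDerivAt_mul_comp_of_hasDerivAt_inv_sq (hs : Differentiable ℝ s) (hs0 : ∀ z, s z ≠ 0)
    (hη : ∀ z, HasDerivAt η (s z ^ 2)⁻¹ z) (hΦ : Differentiable ℂ Φ) (z : ℝ) :
    HasDerivAt (fun z ↦ s z * Φ (η z)) (deriv s z * Φ (η z) + (s z)⁻¹ * deriv Φ (η z)) z := by
  have h : HasDerivAt (fun z ↦ s z * Φ (η z))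
      (deriv s z * Φ (η z) + s z * (deriv Φ (η z) * (s z ^ 2)⁻¹)) z :=
    (hs z).hasDerivAt.mul ((hΦ (η z)).hasDerivAt.comp z (hη z))
  refine h.congr_deriv ?_
  field_simp [hs0 z]

theorem deriv_deriv_mul_comp_of_hasDerivAt_inv_sq (hs : Differentiable ℝ s)
    (hs' : Differentiable ℝ (deriv s)) (hs0 : ∀ z, s z ≠ 0) (hη : ∀ z, HasDerivAt η (s z ^ 2)⁻¹ z)
    (hΦ : Differentiable ℂ Φ) (hΦ' : Differentiable ℂ (deriv Φ)) (z : ℝ) :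
    deriv (deriv fun z ↦ s z * Φ (η z)) z
      = deriv (deriv s) z * Φ (η z) + (s z ^ 3)⁻¹ * deriv (deriv Φ) (η z) := by
  have hfirst : deriv (fun z ↦ s z * Φ (η z))
      = fun z ↦ deriv s z * Φ (η z) + (s z)⁻¹ * deriv Φ (η z) :=
    funext fun z ↦ (hasDerivAt_mul_comp_of_hasDerivAt_inv_sq hs hs0 hη hΦ z).deriv
  have hsecond : HasDerivAt (fun z ↦ deriv s z * Φ (η z) + (s z)⁻¹ * deriv Φ (η z))
      (deriv (deriv s) z * Φ (η z) + deriv s z * (deriv Φ (η z) * (s z ^ 2)⁻¹)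
        + (-deriv s z / s z ^ 2 * deriv Φ (η z) + (s z)⁻¹ * (deriv (deriv Φ) (η z) * (s z ^ 2)⁻¹)))
      z := ((hs' z).hasDerivAt.mul ((hΦ (η z)).hasDerivAt.comp z (hη z))).add
    (((hs z).hasDerivAt.inv (hs0 z)).mul ((hΦ' (η z)).hasDerivAt.comp z (hη z)))
  rw [hfirst, hsecond.deriv]
  field_simp [hs0 z]
  ring

end Liouville

theorem langer_conjugation_general
    (U : ℝ → ℂ) (c Uc' ε : ℂ) (η sq : ℝ → ℂ) (Φ f : ℂ → ℂ) (φ : ℝ → ℂ)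
    (hsq : ContDiff ℝ 2 sq)
    (hsq0 : ∀ z : ℝ, sq z ≠ 0)
    (hΦ : ∀ w : ℂ, DifferentiableAt ℂ Φ w ∧ DifferentiableAt ℂ (deriv Φ) w)
    (hsq2 : ∀ z : ℝ, (sq z) ^ 2 = (deriv η z)⁻¹)
    (hLanger : ∀ z : ℝ, (U z - c) * ((deriv η z)⁻¹) ^ 2 = Uc' * η z)
    (hrel : ∀ z : ℝ, deriv (deriv φ) z = sq z * Φ (η z))
    (hAiry : ∀ w : ℂ, ε * deriv (deriv Φ) w - Uc' * w * Φ w = f w) :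
    ∀ z : ℝ,
      ε * iteratedDeriv 4 φ z - (U z - c) * deriv (deriv φ) z
        = ((sq z)⁻¹) ^ 3 * f (η z)
          + ε * (deriv (deriv sq) z) * (sq z)⁻¹ * deriv (deriv φ) z := by
  intro z
  have hsq' : ContDiff ℝ 1 (deriv sq) := hsq.deriv'
  have hφ4 : iteratedDeriv 4 φ z = deriv (deriv fun z ↦ sq z * Φ (η z)) z := by
    rw [iteratedDeriv_eq_iterate, ← funext hrel]
    rfl
  have hU : (U z - c) * sq z ^ 4 = Uc' * η z := by simpa [← hsq2 z, ← pow_mul] using hLanger z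
  rw [hφ4, deriv_deriv_mul_comp_of_hasDerivAt_inv_sq (hsq.differentiable two_ne_zero)
    (hsq'.differentiable one_ne_zero) hsq0 (fun z ↦ hasDerivAt_of_sq_eq_inv_deriv (hsq0 z) (hsq2 z))
    (fun w ↦ (hΦ w).1) (fun w ↦ (hΦ w).2), hrel z, ← hAiry (η z)]
  field_simp [hsq0 z]
  linear_combination -Φ (η z) * hU

/-- Langer conjugation formula between the primitive Airy operator
`ε∂_z⁴ - (U-c)∂_z²` and the classical Airy operator `ε∂_η² - U'_c η`.
Here `sq z` stands for `ż(η(z))^{1/2}`, i.e. `(sq z)² = (η'(z))⁻¹`. -/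
theorem langer_conjugation
    (U : ℝ → ℂ) (c Uc' ε : ℂ) (η sq : ℝ → ℂ) (Φ f : ℂ → ℂ) (φ : ℝ → ℂ)
    (hφ : ContDiff ℝ 4 φ) (hη : ContDiff ℝ 2 η) (hsq : ContDiff ℝ 2 sq)
    (hsq0 : ∀ z : ℝ, sq z ≠ 0)
    (hΦ : ∀ w : ℂ, DifferentiableAt ℂ Φ w ∧ DifferentiableAt ℂ (deriv Φ) w)
    (hsq2 : ∀ z : ℝ, (sq z) ^ 2 = (deriv η z)⁻¹)
    (hLanger : ∀ z : ℝ, (U z - c) * ((deriv η z)⁻¹) ^ 2 = Uc' * η z)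
    (hrel : ∀ z : ℝ, deriv (deriv φ) z = sq z * Φ (η z))
    (hAiry : ∀ w : ℂ, ε * deriv (deriv Φ) w - Uc' * w * Φ w = f w) :
    ∀ z : ℝ,
      ε * iteratedDeriv 4 φ z - (U z - c) * deriv (deriv φ) z
        = ((sq z)⁻¹) ^ 3 * f (η z)
          + ε * (deriv (deriv sq) z) * (sq z)⁻¹ * deriv (deriv φ) z :=
  langer_conjugation_general U c Uc' ε η sq Φ f φ hsq hsq0 hΦ hsq2 hLanger hrel hAiry
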